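/- Let N be a finite-dimensional real inner product space and A : N → N a self-adjoint invertible linear endomorphism. Then the oscillatory Gaussian (Fresnel) integral ∫_N exp((i/2)⟨An, n⟩) dn equals exp((πi/4)·sgn(A)) · (2π)^(dim N / 2) · |det A|^(−1/2), where sgn(A) is the signature of A (number of positive minus number of negative eigenvalues) and dn is the Lebesgue measure induced by the inner product. -/

import Mathlib

open MeasureTheory

lemma fresnel_base (l : ℝ) (hl : l ≠ 0) :
    ((Real.pi : ℂ) / ((0:ℂ) - Complex.I * l / 2)) = ((2 * Real.pi / l : ℝ) : ℂ) * Complex.I := by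
  have hl' : (l : ℂ) ≠ 0 := by exact_mod_cast hl
  have hd : ((0:ℂ) - Complex.I * l / 2) ≠ 0 := by
    simp [Complex.ext_iff, hl, Complex.div_im, Complex.div_re]
  field_simp
  push_cast
  field_simp
  ring_nf
  rw [Complex.I_sq]
  ring

lemma fresnel_factor (l : ℝ) (hl : l ≠ 0) :
    ((Real.pi : ℂ) / ((0:ℂ) - Complex.I * l / 2)) ^ (1/2 : ℂ) =
      (((2 * Real.pi / |l|) ^ ((1:ℝ)/2) : ℝ) : ℂ) *
        Complex.exp (Real.pi * Complex.I / 4 * Real.sign l) := by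
  rw [fresnel_base l hl]
  set r : ℝ := 2 * Real.pi / l with hr
  have hrabs : ‖((r:ℝ):ℂ) * Complex.I‖ = 2 * Real.pi / |l| := by
    simp [hr, abs_div, abs_of_pos Real.two_pi_pos, abs_of_pos, mul_comm]
    rw [abs_of_pos Real.pi_pos]
  have hrne : ((r:ℝ):ℂ) * Complex.I ≠ 0 := by
    simp [hr, Complex.ext_iff, div_eq_zero_iff, hl, Real.pi_ne_zero, Real.pi_pos.ne']
  have harg : Complex.arg (((r:ℝ):ℂ) * Complex.I) = Real.sign l * (Real.pi / 2) := by
    rcases lt_or_gt_of_ne hl with h | h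
    · have hrneg : r < 0 := div_neg_of_pos_of_neg Real.two_pi_pos h
      rw [Real.sign_of_neg h, show (-1 : ℝ) * (Real.pi/2) = -(Real.pi/2) by ring,
        Complex.arg_eq_neg_pi_div_two_iff]
      constructor <;> simp [hrneg]
    · have hrpos : 0 < r := div_pos Real.two_pi_pos h
      rw [Real.sign_of_pos h, one_mul, Complex.arg_eq_pi_div_two_iff]
      constructor <;> simp [hrpos]
  have hlog : Complex.log (((r:ℝ):ℂ) * Complex.I) =
      (Real.log (2 * Real.pi / |l|) : ℂ) + (Real.sign l * (Real.pi / 2) : ℝ) * Complex.I := by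
    rw [Complex.log, hrabs, harg]
  rw [Complex.cpow_def_of_ne_zero hrne, hlog]
  have h2 : ((Real.log (2 * Real.pi / |l|) : ℂ) +
        ((Real.sign l * (Real.pi / 2) : ℝ) : ℂ) * Complex.I) * (1/2 : ℂ)
      = (Real.log (2 * Real.pi / |l|) * (1/2 : ℝ) : ℝ) +
        Real.pi * Complex.I / 4 * Real.sign l := by
    push_cast; ring
  rw [h2, Complex.exp_add]
  congr 1
  rw [Real.rpow_def_of_pos (by positivity)]
  push_cast [Complex.ofReal_exp]
  norm_num

lemma fresnel_prod_real (m : ℕ) (lam : Fin m → ℝ) (hlam : ∀ j, lam j ≠ 0) :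
    (∏ j, (2 * Real.pi / |lam j|) ^ ((1:ℝ)/2)) =
      (2 * Real.pi) ^ ((m : ℝ) / 2) * |∏ j, lam j| ^ (-(1 / 2) : ℝ) := by
  have h2π : (0:ℝ) ≤ 2 * Real.pi := by positivity
  have hprodpos : 0 < ∏ j, |lam j| :=
    Finset.prod_pos fun j _ => abs_pos.mpr (hlam j)
  calc (∏ j, (2 * Real.pi / |lam j|) ^ ((1:ℝ)/2))
      = ∏ j, ((2 * Real.pi) ^ ((1:ℝ)/2) / |lam j| ^ ((1:ℝ)/2)) := by
        refine Finset.prod_congr rfl fun j _ => ?_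
        rw [Real.div_rpow h2π (abs_nonneg _)]
    _ = ((2 * Real.pi) ^ ((1:ℝ)/2)) ^ m / (∏ j, |lam j| ^ ((1:ℝ)/2)) := by
        rw [Finset.prod_div_distrib, Finset.prod_const, Finset.card_univ, Fintype.card_fin]
    _ = (2 * Real.pi) ^ ((m : ℝ) / 2) / (∏ j, |lam j|) ^ ((1:ℝ)/2) := by
        rw [← Real.rpow_natCast ((2 * Real.pi) ^ ((1:ℝ)/2)) m, ← Real.rpow_mul h2π,
          Real.finset_prod_rpow _ _ (fun j _ => abs_nonneg _)]
        ring_nf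
    _ = (2 * Real.pi) ^ ((m : ℝ) / 2) * |∏ j, lam j| ^ (-(1 / 2) : ℝ) := by
        rw [div_eq_mul_inv, ← Real.rpow_neg (le_of_lt hprodpos), Finset.abs_prod]

lemma fresnel_integral (m : ℕ)
    (A : EuclideanSpace ℝ (Fin m) →ₗ[ℝ] EuclideanSpace ℝ (Fin m))
    (b : OrthonormalBasis (Fin m) ℝ (EuclideanSpace ℝ (Fin m)))
    (lam : Fin m → ℝ)
    (hdiag : ∀ j, A (b j) = lam j • b j) {ε : ℝ} (hε : 0 < ε) :
    (∫ x : EuclideanSpace ℝ (Fin m),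
        Complex.exp (Complex.I / 2 * ((inner ℝ (A x) x : ℝ) : ℂ) -
          (ε : ℂ) * (((inner ℝ x x : ℝ)) : ℂ)))
      = ∏ j, ((Real.pi : ℂ) / ((ε:ℂ) - Complex.I * lam j / 2)) ^ (1/2 : ℂ) := by
  have hAy : ∀ y : EuclideanSpace ℝ (Fin m),
      A (b.repr.symm y) = b.repr.symm (WithLp.toLp 2 (fun j => lam j * y j)) := by
    intro y
    rw [← b.sum_repr_symm, ← b.sum_repr_symm, map_sum]
    congr 1
    ext j
    rw [LinearMap.map_smul, hdiag, smul_smul, mul_comm]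
  have hQ : ∀ y : EuclideanSpace ℝ (Fin m),
      (inner ℝ (A (b.repr.symm y)) (b.repr.symm y) : ℝ) = ∑ j, lam j * (y j)^2 := by
    intro y
    rw [hAy, LinearIsometryEquiv.inner_map_eq_flip]
    simp [PiLp.inner_apply, LinearIsometryEquiv.apply_symm_apply]
    congr 1; ext j; ring
  have hN : ∀ y : EuclideanSpace ℝ (Fin m),
      (inner ℝ (b.repr.symm y) (b.repr.symm y) : ℝ) = ∑ j, (y j)^2 := by
    intro y
    rw [LinearIsometryEquiv.inner_map_eq_flip]
    simp [PiLp.inner_apply, LinearIsometryEquiv.apply_symm_apply, sq]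
    rw [← real_inner_self_eq_norm_mul_norm, PiLp.inner_apply]
    simp only [RCLike.inner_apply, conj_trivial]
  rw [← (b.measurePreserving_repr_symm).integral_comp
      b.repr.symm.toHomeomorph.measurableEmbedding]
  simp only [hQ, hN]
  rw [← ((EuclideanSpace.volume_preserving_symm_measurableEquiv_toLp (Fin m)).symm).integral_comp
      (MeasurableEquiv.measurableEmbedding _)]
  have key := GaussianFourier.integral_cexp_neg_sum_mul_add
    (b := fun j : Fin m => (ε : ℂ) - Complex.I * lam j / 2)
    (fun j => by simpa using hε) (fun _ => 0)
  simp only [zero_mul, Finset.sum_const_zero, add_zero, zero_pow, ne_eq, OfNat.ofNat_ne_zero,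
    not_false_eq_true, zero_div, Complex.exp_zero, mul_one] at key
  rw [← key]
  congr 1
  ext v
  have hv : ∀ j, (MeasurableEquiv.toLp 2 (Fin m → ℝ)).symm.symm v j = v j := fun j => rfl
  simp only [hv]
  congr 1
  push_cast
  simp only [Finset.mul_sum, ← Finset.sum_neg_distrib, ← Finset.sum_sub_distrib]
  exact Finset.sum_congr rfl fun j _ => by ring

/-- Fresnel integral on a finite-dimensional real inner product space `N` (modeled as
`EuclideanSpace ℝ (Fin m)`): for a self-adjoint invertible `A`, orthogonally diagonalized
by an orthonormal basis `b` with nonzero eigenvalues `λ j`, the regularized oscillatory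
Gaussian integral `∫_N exp((i/2)⟨An, n⟩) dn` — defined as the `ε → 0⁺` limit of
`∫_N exp((i/2)⟨An, n⟩ − ε⟨n, n⟩) dn` — equals
`exp((πi/4) sgn(A)) · (2π)^{dim N / 2} · |det A|^{−1/2}`, where
`sgn(A) = Σ_j sgn(λ j)` and `|det A| = |∏_j λ j|`. -/
theorem stmt_0 (m : ℕ)
    (A : EuclideanSpace ℝ (Fin m) →ₗ[ℝ] EuclideanSpace ℝ (Fin m))
    (hA : ∀ x y : EuclideanSpace ℝ (Fin m), (inner ℝ (A x) y : ℝ) = inner ℝ x (A y))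
    (b : OrthonormalBasis (Fin m) ℝ (EuclideanSpace ℝ (Fin m)))
    (lam : Fin m → ℝ) (hlam : ∀ j, lam j ≠ 0)
    (hdiag : ∀ j, A (b j) = lam j • b j) :
    Filter.Tendsto
      (fun ε : ℝ => ∫ x : EuclideanSpace ℝ (Fin m),
        Complex.exp (Complex.I / 2 * ((inner ℝ (A x) x : ℝ) : ℂ) -
          (ε : ℂ) * (((inner ℝ x x : ℝ)) : ℂ)))
      (nhdsWithin 0 (Set.Ioi 0))
      (nhds (Complex.exp (Real.pi * Complex.I / 4 * ((∑ j, Real.sign (lam j)) : ℝ)) *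
        (((2 * Real.pi) ^ ((m : ℝ) / 2) : ℝ) : ℂ) *
        ((|∏ j, lam j| ^ (-(1 / 2) : ℝ) : ℝ) : ℂ))) := by
  have hval : (∏ j, ((Real.pi : ℂ) / ((0:ℂ) - Complex.I * lam j / 2)) ^ (1/2 : ℂ))
      = Complex.exp (Real.pi * Complex.I / 4 * ((∑ j, Real.sign (lam j)) : ℝ)) *
        (((2 * Real.pi) ^ ((m : ℝ) / 2) : ℝ) : ℂ) *
        ((|∏ j, lam j| ^ (-(1 / 2) : ℝ) : ℝ) : ℂ) := by
    calc (∏ j, ((Real.pi : ℂ) / ((0:ℂ) - Complex.I * lam j / 2)) ^ (1/2 : ℂ))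
        = ∏ j, ((((2 * Real.pi / |lam j|) ^ ((1:ℝ)/2) : ℝ) : ℂ) *
            Complex.exp (Real.pi * Complex.I / 4 * Real.sign (lam j))) :=
          Finset.prod_congr rfl fun j _ => fresnel_factor (lam j) (hlam j)
      _ = ((∏ j, (2 * Real.pi / |lam j|) ^ ((1:ℝ)/2) : ℝ) : ℂ) *
            Complex.exp (Real.pi * Complex.I / 4 * ((∑ j, Real.sign (lam j)) : ℝ)) := by
          rw [Finset.prod_mul_distrib, ← Complex.ofReal_prod, ← Complex.exp_sum]
          congr 1
          rw [← Finset.mul_sum]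
          push_cast
          ring
      _ = _ := by
          rw [fresnel_prod_real m lam hlam]
          push_cast
          ring
  rw [← hval]
  apply Filter.Tendsto.congr'
    (f₁ := fun ε : ℝ => ∏ j, ((Real.pi : ℂ) / ((ε:ℂ) - Complex.I * lam j / 2)) ^ (1/2 : ℂ))
  · filter_upwards [self_mem_nhdsWithin] with ε hε
    exact (fresnel_integral m A b lam hdiag hε).symm
  · apply tendsto_finset_prod
    intro j _
    have hd0 : ((0:ℝ):ℂ) - Complex.I * lam j / 2 ≠ 0 := by
      simp only [Complex.ofReal_zero]
      simp [Complex.ext_iff, hlam j, Complex.div_im, Complex.div_re]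
    have hbase : ContinuousAt
        (fun ε : ℝ => (Real.pi : ℂ) / ((ε:ℂ) - Complex.I * lam j / 2)) 0 := by
      apply ContinuousAt.div continuousAt_const
      · fun_prop
      · exact hd0
    have him : ((Real.pi : ℂ) / (((0:ℝ):ℂ) - Complex.I * lam j / 2)).im ≠ 0 := by
      rw [show (((0:ℝ):ℂ) - Complex.I * lam j / 2) = ((0:ℂ) - Complex.I * lam j / 2) by
        norm_num, fresnel_base (lam j) (hlam j)]
      simp [div_eq_zero_iff, hlam j, Real.pi_ne_zero]
    have hcont : ContinuousAt
        (fun ε : ℝ => ((Real.pi : ℂ) / ((ε:ℂ) - Complex.I * lam j / 2)) ^ (1/2 : ℂ)) 0 :=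
      ContinuousAt.comp (g := fun z : ℂ => z ^ (1/2 : ℂ))
        (continuousAt_cpow_const (Complex.mem_slitPlane_iff.mpr (Or.inr him))) hbase
    have := hcont.continuousWithinAt (s := Set.Ioi (0:ℝ))
    unfold ContinuousWithinAt at this
    convert this using 2
    simp
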